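/- arXiv:1703.10460 — 3 statements merged into one kernel-verified Lean document; each statement's English description precedes it below -/
import Mathlib

section
/- Two finite dimensional vector spaces V and W over the same finite field F are isomorphic as vector spaces if and only if their linear dependence graphs Γ(V) and Γ(W) are isomorphic as graphs. -/
/-!
A linear isomorphism preserves linear dependence. Conversely, a graph isomorphism is in particular
a bijection, and a finite-dimensional space over `F` has `|F| ^ dim` elements, so equal
cardinalities force equal dimensions.
-/

/-- The linear dependence graph of a vector space `V` over a field `F`:
two distinct vectors are adjacent iff they are linearly dependent. -/
def depGraph (F V : Type*) [Field F] [AddCommGroup V] [Module F V] : SimpleGraph V where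
  Adj a b := a ≠ b ∧ ∃ c : F, b = c • a ∨ a = c • b
  symm := by
    constructor
    rintro a b ⟨hne, c, h | h⟩
    · exact ⟨hne.symm, c, Or.inr h⟩
    · exact ⟨hne.symm, c, Or.inl h⟩
  loopless := by constructor; rintro a ⟨h, _⟩; exact h rfl

namespace LinearEquiv

variable {F V W : Type*} [Field F] [AddCommGroup V] [Module F V] [AddCommGroup W] [Module F W]

theorem depGraph_adj_map_iff (e : V ≃ₗ[F] W) {a b : V} :
    (depGraph F W).Adj (e a) (e b) ↔ (depGraph F V).Adj a b := by
  simp only [depGraph, ← map_smul, e.injective.ne_iff, e.injective.eq_iff]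

def toDepGraphIso (e : V ≃ₗ[F] W) : depGraph F V ≃g depGraph F W :=
  ⟨e.toEquiv, e.depGraph_adj_map_iff⟩

end LinearEquiv

theorem nonempty_linearEquiv_of_natCard_eq {F V W : Type*} [Field F] [Finite F]
    [AddCommGroup V] [Module F V] [FiniteDimensional F V]
    [AddCommGroup W] [Module F W] [FiniteDimensional F W]
    (h : Nat.card V = Nat.card W) : Nonempty (V ≃ₗ[F] W) := by
  rw [Module.natCard_eq_pow_finrank (K := F) (V := V),
    Module.natCard_eq_pow_finrank (K := F) (V := W)] at h
  exact FiniteDimensional.nonempty_linearEquiv_of_finrank_eq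
    (Nat.pow_right_injective Finite.one_lt_card h)

theorem stmt6 (F V W : Type*) [Field F] [Fintype F]
    [AddCommGroup V] [Module F V] [FiniteDimensional F V]
    [AddCommGroup W] [Module F W] [FiniteDimensional F W] :
    Nonempty (V ≃ₗ[F] W) ↔ Nonempty (depGraph F V ≃g depGraph F W) :=
  ⟨fun ⟨e⟩ ↦ ⟨e.toDepGraphIso⟩,
    fun ⟨g⟩ ↦ nonempty_linearEquiv_of_natCard_eq (Nat.card_congr g.toEquiv)⟩
end

section
/- The algebraic connectivity (second smallest Laplacian eigenvalue) of Γ(V) is 1, provided dim(V) ≥ 2. -/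
/-!
The vertex `0` is adjacent to every other vector. If `L v = λ v` with `λ ≠ 0`, then `∑ v = 0`,
and the edges at `0` alone give
`λ ‖v‖² = vᵀ L v ≥ ∑ⱼ (v 0 - v j)² = |V| v(0)² + ‖v‖² ≥ ‖v‖²`, so `λ ≥ 1`.
Conversely, the neighbours of a nonzero vector are the other points of its line, so on functions
that vanish at `0` and are constant on punctured lines the Laplacian acts as the identity except
at `0`, where it gives `-∑ f`. For independent `a, b` the difference of the indicators of `F ∙ a`
and `F ∙ b` is such a function with sum `0`, hence an eigenvector for `1`.
-/

open Finset Matrix SimpleGraph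

theorem Matrix.mem_spectrum_iff_exists_mulVec_eq_smul {n K : Type*} [Fintype n] [DecidableEq n]
    [Field K] {A : Matrix n n K} {μ : K} :
    μ ∈ spectrum K A ↔ ∃ v ≠ 0, A *ᵥ v = μ • v := by
  rw [← spectrum_toLin', ← Module.End.hasEigenvalue_iff_mem_spectrum]
  constructor
  · intro h
    obtain ⟨v, hv⟩ := h.exists_hasEigenvector
    exact ⟨v, hv.2, hv.apply_eq_smul⟩
  · rintro ⟨v, hv0, hv⟩
    exact Module.End.hasEigenvalue_of_hasEigenvector ⟨Module.End.mem_eigenspace_iff.mpr hv, hv0⟩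

namespace SimpleGraph

variable {W : Type*} [Fintype W] [DecidableEq W] (G : SimpleGraph W) [DecidableRel G.Adj]

theorem sum_eq_zero_of_lapMatrix_mulVec_eq_smul {R : Type*} [Field R] {x : R} {v : W → R}
    (hv : G.lapMatrix R *ᵥ v = x • v) (hx : x ≠ 0) : ∑ i, v i = 0 := by
  have h : x * ∑ i, v i = 0 :=
    calc x * ∑ i, v i = (fun _ ↦ 1) ⬝ᵥ (G.lapMatrix R *ᵥ v) := by
          simp [hv, dotProduct, mul_sum]
      _ = (G.lapMatrix R *ᵥ fun _ ↦ 1) ⬝ᵥ v := by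
          rw [Matrix.dotProduct_mulVec, ← vecMul_transpose, G.isSymm_lapMatrix R]
      _ = 0 := by rw [lapMatrix_mulVec_const_eq_zero, zero_dotProduct]
  exact (mul_eq_zero.mp h).resolve_left hx

variable {G}

theorem sum_sq_sub_le_dotProduct_lapMatrix_mulVec {w₀ : W} (hw₀ : ∀ u ≠ w₀, G.Adj w₀ u)
    (v : W → ℝ) : ∑ j, (v w₀ - v j) ^ 2 ≤ v ⬝ᵥ (G.lapMatrix ℝ *ᵥ v) := by
  rw [← Matrix.toLinearMap₂'_apply', lapMatrix_toLinearMap₂', le_div_iff₀ two_pos]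
  -- the edges at `w₀`, once in each orientation
  have hle : ∀ i j, ((if i = w₀ then (v w₀ - v j) ^ 2 else 0) +
      if j = w₀ then (v w₀ - v i) ^ 2 else 0) ≤ if G.Adj i j then (v i - v j) ^ 2 else 0 := by
    intro i j
    by_cases hi : i = w₀ <;> by_cases hj : j = w₀
    · simp [hi, hj]
    · subst hi; simp [hj, hw₀ j hj]
    · subst hj; simp [hi, (hw₀ i hi).symm, sub_sq_comm (v i)]
    · simp only [hi, hj, if_false, add_zero]; positivity
  calc (∑ j, (v w₀ - v j) ^ 2) * 2
      = ∑ i, ∑ j, ((if i = w₀ then (v w₀ - v j) ^ 2 else 0) +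
          if j = w₀ then (v w₀ - v i) ^ 2 else 0) := by
        simp only [sum_add_distrib, sum_ite_irrel, sum_const_zero,
          sum_ite_eq', mem_univ, if_true]
        ring
    _ ≤ _ := sum_le_sum fun i _ ↦ sum_le_sum fun j _ ↦ hle i j

theorem dotProduct_self_le_dotProduct_lapMatrix_mulVec {w₀ : W} (hw₀ : ∀ u ≠ w₀, G.Adj w₀ u)
    {v : W → ℝ} (hv : ∑ i, v i = 0) : v ⬝ᵥ v ≤ v ⬝ᵥ (G.lapMatrix ℝ *ᵥ v) := by
  refine le_trans ?_ (sum_sq_sub_le_dotProduct_lapMatrix_mulVec hw₀ v)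
  have h : ∑ j, (v w₀ - v j) ^ 2 = v ⬝ᵥ v + Fintype.card W * v w₀ ^ 2 - 2 * v w₀ * ∑ j, v j := by
    rw [dotProduct, mul_sum, eq_sub_iff_add_eq, ← sum_add_distrib]
    simp_rw [show ∀ x, (v w₀ - v x) ^ 2 + 2 * v w₀ * v x = v x * v x + v w₀ ^ 2 from
      fun x ↦ by ring]
    rw [sum_add_distrib, sum_const, card_univ, nsmul_eq_mul]
  rw [h, hv]
  nlinarith [sq_nonneg (v w₀)]

theorem one_le_of_lapMatrix_mulVec_eq_smul {w₀ : W} (hw₀ : ∀ u ≠ w₀, G.Adj w₀ u) {x : ℝ}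
    {v : W → ℝ} (hv0 : v ≠ 0) (hv : G.lapMatrix ℝ *ᵥ v = x • v) (hx : x ≠ 0) : 1 ≤ x := by
  have hpos : 0 < v ⬝ᵥ v :=
    (Fintype.sum_nonneg fun i ↦ mul_self_nonneg (v i)).lt_of_ne'
      (dotProduct_self_eq_zero.not.mpr hv0)
  have hle := dotProduct_self_le_dotProduct_lapMatrix_mulVec hw₀
    (G.sum_eq_zero_of_lapMatrix_mulVec_eq_smul hv hx)
  rw [hv, dotProduct_smul, smul_eq_mul] at hle
  exact le_of_mul_le_mul_right (by rwa [one_mul]) hpos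

end SimpleGraph

theorem card_filter_mem_span_singleton {F V : Type*} [Field F] [AddCommGroup V] [Module F V]
    [Fintype V] {a : V} [DecidablePred (· ∈ F ∙ a)] (ha : a ≠ 0) :
    #{u | u ∈ F ∙ a} = Nat.card F := by
  rw [← Fintype.card_subtype, ← Nat.card_eq_fintype_card]
  exact Nat.card_congr (LinearEquiv.toSpanNonzeroSingleton F V a ha).toEquiv.symm

section depGraph

variable {F V : Type*} [Field F] [AddCommGroup V] [Module F V]

theorem depGraph_zero_adj {u : V} : (depGraph F V).Adj 0 u ↔ u ≠ 0 :=
  ⟨fun h ↦ h.ne.symm, fun h ↦ ⟨h.symm, 0, Or.inr (zero_smul F u).symm⟩⟩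

theorem depGraph_adj_iff_of_ne_zero {w u : V} (hw : w ≠ 0) :
    (depGraph F V).Adj w u ↔ u ≠ w ∧ u ∈ F ∙ w := by
  simp only [Submodule.mem_span_singleton]
  constructor
  · rintro ⟨hne, c, h | h⟩
    · exact ⟨hne.symm, c, h.symm⟩
    · have hc : c ≠ 0 := by rintro rfl; exact hw (h.trans (zero_smul F u))
      exact ⟨hne.symm, c⁻¹, by rw [h, smul_smul, inv_mul_cancel₀ hc, one_smul]⟩
  · rintro ⟨hne, c, rfl⟩
    exact ⟨hne.symm, c, Or.inl rfl⟩

variable [Fintype V] [DecidableEq V] [DecidableRel (depGraph F V).Adj]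

theorem depGraph_lapMatrix_mulVec_apply_zero {f : V → ℝ} (hf0 : f 0 = 0) :
    ((depGraph F V).lapMatrix ℝ *ᵥ f) 0 = -∑ u, f u := by
  have hN : (depGraph F V).neighborFinset 0 = univ.erase 0 := by
    ext u
    simp [depGraph_zero_adj]
  rw [lapMatrix_mulVec_apply, hf0, mul_zero, zero_sub, hN, sum_erase _ hf0]

theorem depGraph_lapMatrix_mulVec_apply_of_ne_zero {f : V → ℝ} (hf0 : f 0 = 0)
    (hf : ∀ (c : F) (w : V), c ≠ 0 → f (c • w) = f w) {w : V} (hw : w ≠ 0) :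
    ((depGraph F V).lapMatrix ℝ *ᵥ f) w = f w := by
  have hterm : ∀ u ∈ (depGraph F V).neighborFinset w, f w - f u = if u = 0 then f w else 0 := by
    intro u hu
    obtain ⟨-, hu⟩ := (mem_neighborFinset _ _ _).trans (depGraph_adj_iff_of_ne_zero hw) |>.mp hu
    obtain ⟨c, rfl⟩ := Submodule.mem_span_singleton.mp hu
    rcases eq_or_ne c 0 with rfl | hc
    · rw [zero_smul, hf0, sub_zero, if_pos rfl]
    · rw [hf c w hc, sub_self, if_neg (smul_ne_zero hc hw)]
  have h0 : (0 : V) ∈ (depGraph F V).neighborFinset w :=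
    (mem_neighborFinset _ _ _).mpr (depGraph_zero_adj.mpr hw).symm
  rw [lapMatrix_mulVec_apply, ← card_neighborFinset_eq_degree, ← nsmul_eq_mul, ← sum_const,
    ← sum_sub_distrib, sum_congr rfl hterm, sum_ite_eq', if_pos h0]

theorem depGraph_lapMatrix_mulVec_eq_self {f : V → ℝ} (hf0 : f 0 = 0)
    (hf : ∀ (c : F) (w : V), c ≠ 0 → f (c • w) = f w) (hsum : ∑ u, f u = 0) :
    (depGraph F V).lapMatrix ℝ *ᵥ f = f := by
  funext w
  rcases eq_or_ne w 0 with rfl | hw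
  · rw [depGraph_lapMatrix_mulVec_apply_zero hf0, hsum, hf0, neg_zero]
  · exact depGraph_lapMatrix_mulVec_apply_of_ne_zero hf0 hf hw

theorem one_mem_spectrum_depGraph_lapMatrix (hn : 1 < Module.finrank F V) :
    (1 : ℝ) ∈ spectrum ℝ ((depGraph F V).lapMatrix ℝ) := by
  classical
  have : Nontrivial V := Module.nontrivial_of_finrank_pos (R := F) (by omega)
  obtain ⟨a, ha⟩ := exists_ne (0 : V)
  obtain ⟨b, hab⟩ := exists_linearIndependent_pair_of_one_lt_finrank hn ha
  have hb : b ∉ F ∙ a := fun h ↦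
    let ⟨c, hc⟩ := Submodule.mem_span_singleton.mp h
    (LinearIndependent.pair_iff' ha).mp hab c hc
  have hb0 : b ≠ 0 := fun h ↦ hb (h ▸ zero_mem _)
  let f : V → ℝ := fun u ↦ (if u ∈ F ∙ a then 1 else 0) - if u ∈ F ∙ b then 1 else 0
  refine mem_spectrum_iff_exists_mulVec_eq_smul.mpr ⟨f, fun hf ↦ ?_, ?_⟩
  · have := congrFun hf b
    simp [f, hb, Submodule.mem_span_singleton_self] at this
  rw [one_smul]
  refine depGraph_lapMatrix_mulVec_eq_self (by simp [f]) (fun c w hc ↦ ?_) ?_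
  · simp only [f, Submodule.smul_mem_iff _ hc]
  · rw [sum_sub_distrib, sum_boole, sum_boole, card_filter_mem_span_singleton ha,
      card_filter_mem_span_singleton hb0, sub_self]

end depGraph

theorem stmt16_general (F V : Type*) [Field F] [AddCommGroup V] [Module F V]
    [Fintype V] [DecidableEq V] [DecidableRel (depGraph F V).Adj]
    (hn : 2 ≤ Module.finrank F V) :
    sInf {x : ℝ | x ∈ spectrum ℝ ((depGraph F V).lapMatrix ℝ) ∧ x ≠ 0} = 1 := by
  refine IsLeast.csInf_eq ⟨⟨one_mem_spectrum_depGraph_lapMatrix hn, one_ne_zero⟩, ?_⟩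
  rintro x ⟨hx, hx0⟩
  obtain ⟨v, hv0, hv⟩ := mem_spectrum_iff_exists_mulVec_eq_smul.mp hx
  exact one_le_of_lapMatrix_mulVec_eq_smul (fun u hu ↦ depGraph_zero_adj.mpr hu) hv0 hv hx0

theorem stmt16 (F V : Type*) [Field F] [Fintype F] [AddCommGroup V] [Module F V]
    [Fintype V] [DecidableEq V] [DecidableRel (depGraph F V).Adj]
    (hn : 2 ≤ Module.finrank F V) :
    sInf {x : ℝ | x ∈ spectrum ℝ ((depGraph F V).lapMatrix ℝ) ∧ x ≠ 0} = 1 :=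
  stmt16_general F V hn
end

section
/- The characteristic polynomial of the distance matrix of Γ(V) is [x² − {2(q^n−1) − q}x − (q^n−1)] · (x + q)^{(q^n−1)/(q−1) − 1} · (x + 1)^{(q−2)(q^n−1)/(q−1)}, for dim(V) ≥ 2. -/
/-!
Write `k = q - 1` and `m = (q^n - 1)/(q - 1)` for the number of lines. A nonzero vector is a
pair (line, nonzero scalar), so the distances among nonzero vectors are `2J - I_m ⊗ (J_k + I_k)`,
and the zero vector is at distance `1` from all of them. For `x ∉ {0, -1, -q}`, taking the Schur
complement of the zero-vector entry of `xI - D` leaves `E - (2 + 1/x) J` with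
`E = I_m ⊗ ((x + 1) I_k + J_k)`. The all-ones vector is an eigenvector of `E` with eigenvalue
`x + q`, so the all-ones part contributes one rank-one factor, while `det E` is a product of `m`
rank-one determinants `(x + 1)^(k-1) (x + q)`. Two polynomials agreeing at all but three points
are equal.
-/

open Matrix Projectivization
open scoped Kronecker LinearAlgebra.Projectivization

namespace Matrix

variable {n R : Type*} [Fintype n] [DecidableEq n]

theorem det_one_add_const [CommRing R] (c : R) :
    det (1 + of fun _ _ : n => c) = 1 + Fintype.card n * c := by
  have h : (of fun _ _ : n => c) =
      replicateCol Unit (fun _ => c) * replicateRow Unit (fun _ => (1 : R)) := by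
    ext i j
    simp [mul_apply]
  rw [h, det_one_add_replicateCol_mul_replicateRow]
  simp [dotProduct]

theorem det_smul_one_add_const [Field R] [Nonempty n] {a : R} (ha : a ≠ 0) (c : R) :
    det (a • 1 + of fun _ _ : n => c) = a ^ (Fintype.card n - 1) * (a + Fintype.card n * c) := by
  have h : a • 1 + (of fun _ _ : n => c) = a • (1 + of fun _ _ => c / a) := by
    ext i j
    simp [mul_add, mul_div_cancel₀ _ ha]
  obtain ⟨k, hk⟩ := Nat.exists_eq_add_one_of_ne_zero (Fintype.card_ne_zero (α := n))
  rw [h, det_smul, det_one_add_const, hk, Nat.add_sub_cancel]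
  field_simp
  ring

theorem det_sub_smul_const_of_mul_const [Field R] {E : Matrix n n R} {l : R} (hl : l ≠ 0)
    (hE : E * (of fun _ _ => 1) = l • of fun _ _ => 1) (s : R) :
    det (E - s • of fun _ _ => 1) = det E * (1 - Fintype.card n * s / l) := by
  have hc : (of fun _ _ : n => -(s / l)) = (-(s / l)) • of fun _ _ => 1 := by
    ext
    simp
  have h : E - s • (of fun _ _ : n => (1 : R)) = E * (1 + of fun _ _ => -(s / l)) := by
    rw [hc, Matrix.mul_add, Matrix.mul_one, Matrix.mul_smul, hE, smul_smul,
      neg_mul, div_mul_cancel₀ _ hl, neg_smul, sub_eq_add_neg]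
  rw [h, det_mul, det_one_add_const]
  ring

theorem det_fromBlocks_const_scalar [Field R] (A : Matrix n n R) (b c : R) {x : R}
    (hx : x ≠ 0) :
    det (fromBlocks A (of fun _ _ => b) (of fun _ _ => c) (scalar Unit x)) =
      x * det (A - (b * c / x) • of fun _ _ => 1) := by
  let _ : Invertible (scalar Unit x) := ⟨scalar Unit x⁻¹, by simp [hx], by simp [hx]⟩
  rw [det_fromBlocks₂₂, show ⅟(scalar Unit x) = scalar Unit x⁻¹ from rfl]
  congr 2
  · simp
  · ext i j
    simp [mul_apply]
    ring

end Matrix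

/-- The index `(p, c)` stands for the vector `c • v_p` on the line `p`. -/
def lineDistMatrix (P K : Type*) [DecidableEq P] [DecidableEq K] :
    Matrix (P × K) (P × K) ℝ :=
  of fun i j => if i = j then 0 else if i.1 = j.1 then 1 else 2

/-- The index `Sum.inr ()` stands for the zero vector. -/
def coneLineDistMatrix (P K : Type*) [DecidableEq P] [DecidableEq K] :
    Matrix ((P × K) ⊕ Unit) ((P × K) ⊕ Unit) ℝ :=
  fromBlocks (lineDistMatrix P K) (of fun _ _ => 1) (of fun _ _ => 1) 0

section LineDistance

variable {P K : Type*} [Fintype P] [Fintype K] [DecidableEq P] [DecidableEq K]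

lemma scalar_sub_coneLineDistMatrix (x : ℝ) :
    scalar _ x - coneLineDistMatrix P K =
      fromBlocks (scalar _ x - lineDistMatrix P K) (of fun _ _ => -1) (of fun _ _ => -1)
        (scalar Unit x) := by
  ext (i | i) (j | j) <;> simp [coneLineDistMatrix, fromBlocks, diagonal]

lemma scalar_sub_lineDistMatrix (x : ℝ) :
    scalar _ x - lineDistMatrix P K =
      (1 : Matrix P P ℝ) ⊗ₖ ((x + 1) • 1 + of fun _ _ => 1) -
        (2 : ℝ) • of fun _ _ => 1 := by
  ext ⟨p, c⟩ ⟨p', c'⟩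
  by_cases hp : p = p' <;> by_cases hc : c = c' <;>
    simp [lineDistMatrix, hp, hc, one_apply] <;> ring

lemma det_scalar_sub_coneLineDistMatrix [Nonempty P] [Nonempty K] {x : ℝ} (hx : x ≠ 0)
    (hx1 : x + 1 ≠ 0) (hxk : x + (Fintype.card K + 1) ≠ 0) :
    det (scalar _ x - coneLineDistMatrix P K) =
      (x ^ 2 - (2 * (Fintype.card K * Fintype.card P) - (Fintype.card K + 1)) * x
          - Fintype.card K * Fintype.card P) *
        (x + (Fintype.card K + 1)) ^ (Fintype.card P - 1) *
        (x + 1) ^ ((Fintype.card K - 1) * Fintype.card P) := by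
  set E : Matrix (P × K) (P × K) ℝ :=
    (1 : Matrix P P ℝ) ⊗ₖ ((x + 1) • 1 + of fun _ _ => 1)
  have hschur : scalar _ x - lineDistMatrix P K - ((-1) * (-1) / x) • of (fun _ _ => 1) =
      E - (2 + x⁻¹) • of fun _ _ => 1 := by
    rw [scalar_sub_lineDistMatrix, sub_sub, ← add_smul]
    norm_num [E]
  have hrow : E * (of fun _ _ => 1) = (x + (Fintype.card K + 1)) • of fun _ _ => 1 := by
    ext ⟨p, c⟩ ⟨p', c'⟩
    simp [E, mul_apply, Fintype.sum_prod_type, one_apply, Finset.sum_add_distrib]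
    ring
  rw [scalar_sub_coneLineDistMatrix, det_fromBlocks_const_scalar _ _ _ hx, hschur,
    det_sub_smul_const_of_mul_const hxk hrow, det_kronecker, det_one, one_pow, one_mul,
    det_smul_one_add_const hx1, Fintype.card_prod]
  obtain ⟨k, hk⟩ := Nat.exists_eq_add_one_of_ne_zero (Fintype.card_ne_zero (α := K))
  obtain ⟨m, hm⟩ := Nat.exists_eq_add_one_of_ne_zero (Fintype.card_ne_zero (α := P))
  rw [hk, hm, Nat.add_sub_cancel, Nat.add_sub_cancel, mul_pow, ← pow_mul, pow_succ _ m]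
  rw [hk] at hxk
  push_cast at hxk ⊢
  field_simp
  ring

open Polynomial in
theorem charpoly_coneLineDistMatrix [Nonempty P] [Nonempty K] :
    (coneLineDistMatrix P K).charpoly =
      (X ^ 2 - C (2 * (Fintype.card K * Fintype.card P) - (Fintype.card K + 1 : ℝ)) * X
          - C (Fintype.card K * Fintype.card P : ℝ)) *
        (X + C (Fintype.card K + 1 : ℝ)) ^ (Fintype.card P - 1) *
        (X + 1) ^ ((Fintype.card K - 1) * Fintype.card P) := by
  refine eq_of_infinite_eval_eq _ _ (Set.Infinite.mono ?_
    (Set.Finite.infinite_compl (s := {0, -1, -(Fintype.card K + 1 : ℝ)}) (by simp)))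
  intro x hx
  simp only [Set.mem_compl_iff, Set.mem_insert_iff, Set.mem_singleton_iff, not_or] at hx
  obtain ⟨hx0, hx1, hxk⟩ := hx
  rw [Set.mem_ofPred_eq, eval_charpoly, det_scalar_sub_coneLineDistMatrix hx0
    (by contrapose! hx1; linarith) (by contrapose! hxk; linarith)]
  simp

end LineDistance

section DepGraph

variable {F V : Type*} [Field F] [AddCommGroup V] [Module F V]

variable (F) in
lemma depGraph_adj_zero {v : V} (hv : v ≠ 0) : (depGraph F V).Adj v 0 :=
  ⟨hv, 0, Or.inl (zero_smul F v).symm⟩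

lemma depGraph_adj_iff_mk_eq {u v : V} (hu : u ≠ 0) (hv : v ≠ 0) :
    (depGraph F V).Adj u v ↔ u ≠ v ∧ mk F u hu = mk F v hv := by
  rw [mk_eq_mk_iff']
  refine and_congr_right fun _ => ⟨?_, fun ⟨a, ha⟩ => ⟨a, Or.inr ha.symm⟩⟩
  rintro ⟨c, rfl | rfl⟩
  · have hc : c ≠ 0 := by
      rintro rfl
      simp at hv
    exact ⟨c⁻¹, inv_smul_smul₀ hc u⟩
  · exact ⟨c, rfl⟩

open scoped Classical in
lemma depGraph_dist_eq (u v : V) :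
    (depGraph F V).dist u v = if u = v then 0 else if (depGraph F V).Adj u v then 1 else 2 := by
  split_ifs with huv hadj
  · rw [huv, SimpleGraph.dist_self]
  · exact SimpleGraph.dist_eq_one_iff_adj.2 hadj
  · have hu : u ≠ 0 := by
      rintro rfl
      exact hadj (depGraph_adj_zero F (Ne.symm huv)).symm
    have hv : v ≠ 0 := by
      rintro rfl
      exact hadj (depGraph_adj_zero F huv)
    have hu0 := depGraph_adj_zero F hu
    have hv0 := depGraph_adj_zero F hv
    -- the path `u - 0 - v`
    have hle : (depGraph F V).dist u v ≤ 2 := by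
      have := hu0.reachable.dist_triangle_left v
      rwa [SimpleGraph.dist_eq_one_iff_adj.2 hu0, SimpleGraph.dist_eq_one_iff_adj.2 hv0.symm]
        at this
    have hpos := (hu0.reachable.trans hv0.reachable.symm).pos_dist_of_ne huv
    have hne1 : (depGraph F V).dist u v ≠ 1 := mt SimpleGraph.dist_eq_one_iff_adj.1 hadj
    omega

open scoped Classical in
lemma depGraph_dist_of_ne_zero {u v : V} (hu : u ≠ 0) (hv : v ≠ 0) :
    (depGraph F V).dist u v =
      if u = v then 0 else if mk F u hu = mk F v hv then 1 else 2 := by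
  simp only [depGraph_dist_eq, depGraph_adj_iff_mk_eq hu hv]
  split_ifs <;> simp_all

end DepGraph

section VertexEquiv

variable (F V : Type*) [Field F] [AddCommGroup V] [Module F V] [DecidableEq V]

noncomputable def Projectivization.prodUnitsSumUnitEquiv : (ℙ F V × Fˣ) ⊕ Unit ≃ V :=
  ((nonZeroEquivProjectivizationProdUnits F V).symm.sumCongr (Equiv.refl Unit)).trans
    ((Equiv.optionEquivSumPUnit _).symm.trans (Equiv.optionSubtypeNe 0))

lemma Projectivization.prodUnitsSumUnitEquiv_inl_ne_zero (i : ℙ F V × Fˣ) :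
    prodUnitsSumUnitEquiv F V (.inl i) ≠ 0 :=
  ((nonZeroEquivProjectivizationProdUnits F V).symm i).2

lemma Projectivization.mk_prodUnitsSumUnitEquiv_inl (i : ℙ F V × Fˣ) :
    mk F _ (prodUnitsSumUnitEquiv_inl_ne_zero F V i) = i.1 :=
  congrArg Prod.fst ((nonZeroEquivProjectivizationProdUnits F V).apply_symm_apply i)

lemma reindex_distMatrix_eq_coneLineDistMatrix [DecidableEq Fˣ] [DecidableEq (ℙ F V)] :
    reindex (prodUnitsSumUnitEquiv F V).symm (prodUnitsSumUnitEquiv F V).symm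
        (of fun u v : V => ((depGraph F V).dist u v : ℝ)) =
      coneLineDistMatrix (ℙ F V) Fˣ := by
  have hne := prodUnitsSumUnitEquiv_inl_ne_zero F V
  ext (i | ⟨⟩) (j | ⟨⟩)
  · simp only [reindex_apply, Equiv.symm_symm, submatrix_apply, of_apply, coneLineDistMatrix,
      fromBlocks_apply₁₁, lineDistMatrix]
    rw [depGraph_dist_of_ne_zero (hne i) (hne j), mk_prodUnitsSumUnitEquiv_inl,
      mk_prodUnitsSumUnitEquiv_inl]
    simp [(prodUnitsSumUnitEquiv F V).injective.eq_iff]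
  · simp only [reindex_apply, Equiv.symm_symm, submatrix_apply, of_apply, coneLineDistMatrix,
      fromBlocks_apply₁₂, Nat.cast_eq_one, SimpleGraph.dist_eq_one_iff_adj]
    exact depGraph_adj_zero F (hne i)
  · simp only [reindex_apply, Equiv.symm_symm, submatrix_apply, of_apply, coneLineDistMatrix,
      fromBlocks_apply₂₁, Nat.cast_eq_one, SimpleGraph.dist_eq_one_iff_adj]
    exact (depGraph_adj_zero F (hne j)).symm
  · simp [coneLineDistMatrix]

end VertexEquiv

open Polynomial in
theorem stmt18 (F V : Type*) [Field F] [Fintype F] [AddCommGroup V] [Module F V]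
    [Fintype V] [DecidableEq V] (hn : 2 ≤ Module.finrank F V) :
    (Matrix.of fun a b : V => ((depGraph F V).dist a b : ℝ)).charpoly =
      (X ^ 2 - C (2 * ((Fintype.card F : ℝ) ^ Module.finrank F V - 1) - Fintype.card F) * X
          - C ((Fintype.card F : ℝ) ^ Module.finrank F V - 1)) *
        (X + C (Fintype.card F : ℝ)) ^
          ((Fintype.card F ^ Module.finrank F V - 1) / (Fintype.card F - 1) - 1) *
        (X + 1) ^
          ((Fintype.card F - 2) *
            ((Fintype.card F ^ Module.finrank F V - 1) / (Fintype.card F - 1))) := by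
  classical
  have : Fintype (ℙ F V) := Fintype.ofFinite _
  have : Nontrivial V := Module.nontrivial_of_finrank_pos (R := F) (by omega)
  obtain ⟨v, hv⟩ := exists_ne (0 : V)
  have : Nonempty (ℙ F V) := ⟨mk F v hv⟩
  have hq : Fintype.card Fˣ + 1 = Fintype.card F := by
    have := Fintype.one_lt_card (α := F)
    rw [Fintype.card_units]
    omega
  have hV : Fintype.card F ^ Module.finrank F V =
      Fintype.card Fˣ * Fintype.card (ℙ F V) + 1 := by
    rw [← Module.card_eq_pow_finrank, ← Nat.card_eq_fintype_card, Projectivization.card' F V]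
    simp [Nat.card_eq_fintype_card, Fintype.card_units, mul_comm]
  have hVR : (Fintype.card F : ℝ) ^ Module.finrank F V =
      Fintype.card Fˣ * Fintype.card (ℙ F V) + 1 := by
    exact_mod_cast hV
  rw [← charpoly_reindex (prodUnitsSumUnitEquiv F V).symm,
    reindex_distMatrix_eq_coneLineDistMatrix, charpoly_coneLineDistMatrix, hVR, hV, ← hq]
  simp only [Nat.add_sub_cancel, add_sub_cancel_right, Nat.cast_add, Nat.cast_one,
    Nat.mul_div_cancel_left _ Fintype.card_pos,
    show Fintype.card Fˣ + 1 - 2 = Fintype.card Fˣ - 1 by omega]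
end
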